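/- arXiv:math/0611169 — 4 statements merged into one kernel-verified Lean document; each statement's English description precedes it below -/
import Mathlib

section
/- Let A be an integral domain with a nonnegative ℚ-valued valuation v, and let x₁,…,x_d ∈ A be elements with v(x_i) > 0 for all i. Suppose x₁,…,x_d form an almost regular sequence in A (more precisely, one may permute and replace elements by their powers and the resulting sequences are almost regular). Then for every t ≥ 0, the monomial x₁^t ⋯ x_d^t does not belong to the ideal (x₁^{t+1},…,x_d^{t+1})A. -/
/-!
Suppose `∏ xᵢ^t ∈ (x₁^{t+1},…,x_d^{t+1})` and replace the generators `xⱼ^{t+1}` by `xⱼ` one at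
a time, removing the factor `xⱼ^t` from the monomial. If `a·xⱼ^t ∈ J + (xⱼ^{t+1})`, where `J` is
generated by the other generators, then `(a - b·xⱼ)·xⱼ^t ∈ J` for some `b`, and almost regularity
of the generators of `J` followed by `xⱼ^t` puts `a` into `J + (xⱼ)` up to multipliers of
arbitrarily small valuation. After `d` steps, `1` lies in `(x₁,…,x_d)` up to such multipliers, so
this ideal contains elements of arbitrarily small valuation; but all its elements have valuation
at least `min v(xᵢ) > 0`. For `t = 0` the hypothesis already says `1 ∈ (x₁,…,x_d)`.
-/

/-- An `A`-module `M` is almost zero with respect to `v` if every `m ∈ M` is annihilated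
by elements of `A` of arbitrarily small valuation.  A sequence `y` is almost regular if
each colon module `((y_1,…,y_{i-1}) : y_i)/(y_1,…,y_{i-1})` is almost zero, i.e. any `a`
with `a * y i ∈ (y_j : j < i)` is multiplied into `(y_j : j < i)` by elements of
arbitrarily small positive valuation. -/
def AlmostRegular {A : Type*} [CommRing A] (v : A → WithTop ℚ)
    {n : ℕ} (y : Fin n → A) : Prop :=
  ∀ (i : Fin n) (a : A), a * y i ∈ Ideal.span (y '' {j | j < i}) →
    ∀ ε : ℚ, 0 < ε → ∃ c : A, v c < (ε : WithTop ℚ) ∧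
      c * a ∈ Ideal.span (y '' {j | j < i})

open Ideal Function Set

section

variable {A : Type*} [CommRing A]

/-- The image of `a` in `A ⧸ I` is almost zero with respect to `v`. -/
def AlmostMem (v : A → WithTop ℚ) (I : Ideal A) (a : A) : Prop :=
  ∀ ε : ℚ, 0 < ε → ∃ c : A, v c < ε ∧ c * a ∈ I

namespace AlmostMem

section

variable {v : A → WithTop ℚ} {I J : Ideal A} {a b : A}

theorem mono (h : I ≤ J) (ha : AlmostMem v I a) : AlmostMem v J a := fun ε hε =>
  (ha ε hε).imp fun _ hc => ⟨hc.1, h hc.2⟩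

theorem add_mem (ha : AlmostMem v I a) (hb : b ∈ I) : AlmostMem v I (a + b) := fun ε hε =>
  (ha ε hε).imp fun c hc => ⟨hc.1, by rw [mul_add]; exact I.add_mem hc.2 (I.mul_mem_left c hb)⟩

theorem sup_span_singleton_of_mul_pow_mem {x : A} {t : ℕ}
    (hcolon : ∀ a, a * x ^ t ∈ I → AlmostMem v I a) (hb : b * x ^ t ∈ I ⊔ span {x ^ (t + 1)}) :
    AlmostMem v (I ⊔ span {x}) b := by
  obtain ⟨z, hz, w, hw, hzw⟩ := Submodule.mem_sup.1 hb
  obtain ⟨r, rfl⟩ := mem_span_singleton'.1 hw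
  have hcol : (b - r * x) * x ^ t ∈ I := by
    convert hz using 1
    linear_combination (-1 : A) * hzw
  simpa using ((hcolon _ hcol).mono le_sup_left).add_mem
    (mem_sup_right (mul_mem_left _ r (mem_span_singleton_self x)))

end

variable {v : AddValuation A (WithTop ℚ)} {I J : Ideal A} {a p : A}

theorem of_mem (ha : a ∈ I) : AlmostMem v I a := fun ε hε =>
  ⟨1, by simpa [AddValuation.map_one] using hε, by simpa using ha⟩

theorem of_mul (ha : AlmostMem v J (a * p)) (h : ∀ b, b * p ∈ J → AlmostMem v I b) :
    AlmostMem v I a := by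
  intro ε hε
  obtain ⟨c, hc, hcJ⟩ := ha (ε / 2) (half_pos hε)
  obtain ⟨c', hc', hc'I⟩ := h (c * a) (by rwa [mul_assoc]) (ε / 2) (half_pos hε)
  refine ⟨c' * c, ?_, by rwa [mul_assoc]⟩
  calc v (c' * c) = v c' + v c := AddValuation.map_mul v c' c
    _ < ↑(ε / 2) + ↑(ε / 2) := WithTop.add_lt_add hc' hc
    _ = ε := by rw [← WithTop.coe_add, add_halves]

end AlmostMem

theorem AddValuation.le_of_mem_span {Γ : Type*} [LinearOrderedAddCommMonoidWithTop Γ]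
    {v : AddValuation A Γ} (hv : ∀ a, 0 ≤ v a) {S : Set A} {δ : Γ} (hS : ∀ s ∈ S, δ ≤ v s)
    {z : A} (hz : z ∈ span S) : δ ≤ v z := by
  induction hz using Submodule.span_induction with
  | mem s hs => exact hS s hs
  | zero => simp [AddValuation.map_zero]
  | add a b _ _ ha hb => exact v.map_le_add ha hb
  | smul r z _ hz => rw [smul_eq_mul, AddValuation.map_mul]; exact le_add_of_nonneg_of_le (hv r) hz

theorem WithTop.exists_pos_rat_forall_le {ι : Type*} [Finite ι] {f : ι → WithTop ℚ}
    (hf : ∀ i, 0 < f i) : ∃ q : ℚ, 0 < q ∧ ∀ i, (q : WithTop ℚ) ≤ f i := by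
  have := Fintype.ofFinite ι
  have hinf : 0 < Finset.univ.inf f :=
    (Finset.lt_inf_iff (WithTop.coe_lt_top 0)).2 fun i _ => hf i
  obtain ⟨q, hq0, hq⟩ := exists_between hinf
  lift q to ℚ using hq.ne_top
  exact ⟨q, by exact_mod_cast hq0, fun i => hq.le.trans (Finset.inf_le (Finset.mem_univ i))⟩

theorem not_almostMem_one_span_range {v : AddValuation A (WithTop ℚ)} (hv : ∀ a, 0 ≤ v a)
    {ι : Type*} [Finite ι] {x : ι → A} (hx : ∀ i, 0 < v (x i)) :
    ¬AlmostMem v (span (range x)) 1 := by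
  intro h
  obtain ⟨q, hq, hqx⟩ := WithTop.exists_pos_rat_forall_le hx
  obtain ⟨c, hc, hcx⟩ := h q hq
  rw [mul_one] at hcx
  exact hc.not_ge (v.le_of_mem_span hv (forall_mem_range.2 hqx) hcx)

theorem Set.image_update_compl_singleton {ι α : Type*} [DecidableEq ι] (f : ι → α) (j : ι)
    (b : α) : update f j b '' {j}ᶜ = f '' {j}ᶜ :=
  image_congr fun _ hk => update_of_ne hk b f

theorem Ideal.span_range_update {ι : Type*} [DecidableEq ι] (f : ι → A) (j : ι) (b : A) :
    span (range (update f j b)) = span (f '' {j}ᶜ) ⊔ span {b} := by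
  rw [← image_univ, ← union_compl_self {j}, image_union, image_singleton, update_self,
    image_update_compl_singleton, span_union, sup_comm]

theorem almostMem_of_mul_mem_span_image_compl {v : A → WithTop ℚ} {d : ℕ} {y : Fin d → A}
    (hy : ∀ σ : Equiv.Perm (Fin d), AlmostRegular v (y ∘ σ)) (j : Fin d) (a : A)
    (ha : a * y j ∈ span (y '' {j}ᶜ)) : AlmostMem v (span (y '' {j}ᶜ)) a := by
  obtain ⟨n, rfl⟩ := Nat.exists_eq_add_one_of_ne_zero j.pos.ne'
  have hlt : {k | k < Fin.last n} = {Fin.last n}ᶜ := by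
    ext k
    exact Fin.lt_last_iff_ne_last
  have hprefix : (y ∘ Equiv.swap j (Fin.last n)) '' {k | k < Fin.last n} = y '' {j}ᶜ := by
    rw [image_comp, hlt, Equiv.image_compl, image_singleton, Equiv.swap_apply_right]
  have := hy (Equiv.swap j (Fin.last n)) (Fin.last n) a
  rw [hprefix, comp_apply, Equiv.swap_apply_right] at this
  exact this ha

theorem almostMem_of_mul_prod_pow_mem {v : AddValuation A (WithTop ℚ)} {d : ℕ} {x : Fin d → A}
    (hreg : ∀ (σ : Equiv.Perm (Fin d)) (e : Fin d → ℕ), (∀ i, 0 < e i) →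
      AlmostRegular v (fun i => x (σ i) ^ e i))
    {t : ℕ} (ht : 0 < t) (S : Finset (Fin d)) {a : A}
    (ha : a * ∏ i ∈ S, x i ^ t ∈
      span (range fun i => x i ^ S.piecewise (fun _ => t + 1) (fun _ => 1) i)) :
    AlmostMem v (span (range x)) a := by
  induction S using Finset.induction_on generalizing a with
  | empty => exact .of_mem (by simpa using ha)
  | @insert j S hjS ih =>
    set e := S.piecewise (fun _ => t + 1) (fun _ => 1)
    set I := span ((fun k => x k ^ e k) '' {j}ᶜ)
    have hpow (n : ℕ) : (fun k => x k ^ update e j n k) = update (fun k => x k ^ e k) j (x j ^ n) :=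
      funext (apply_update (fun k m => x k ^ m) e j n)
    have hspan (n : ℕ) : span (range fun k => x k ^ update e j n k) = I ⊔ span {x j ^ n} := by
      rw [hpow, span_range_update]
    have hcolon : ∀ b, b * x j ^ t ∈ I → AlmostMem v I b := by
      have hpos : ∀ k, 0 < update e j t k :=
        (forall_update_iff e fun _ n => 0 < n).2 ⟨ht, fun k _ =>
          S.piecewise_cases (fun _ => t + 1) (fun _ => 1) (0 < ·) (Nat.succ_pos t) one_pos⟩
      have := almostMem_of_mul_mem_span_image_compl (y := fun k => x k ^ update e j t k)
        (fun σ => hreg σ _ fun i => hpos (σ i)) j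
      rwa [hpow, update_self, image_update_compl_singleton] at this
    have hstep : AlmostMem v (I ⊔ span {x j}) (a * ∏ i ∈ S, x i ^ t) := by
      refine AlmostMem.sup_span_singleton_of_mul_pow_mem hcolon ?_
      rw [Finset.prod_insert hjS, Finset.piecewise_insert, hspan] at ha
      convert ha using 1
      ring
    have hS : I ⊔ span {x j} = span (range fun k => x k ^ e k) := by
      rw [← pow_one (x j), ← hspan, update_eq_self_iff.2 (S.piecewise_eq_of_notMem _ _ hjS).symm]
    exact hstep.of_mul fun b hb => ih (hS ▸ hb)

end

/-- if `x₁,…,x_d` have positive valuation and all sequences obtained from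
them by permuting and taking positive powers are almost regular, then the monomial
conjecture holds: `x₁^t ⋯ x_d^t ∉ (x₁^{t+1},…,x_d^{t+1})`. -/
theorem stmt2 {A : Type*} [CommRing A] [IsDomain A]
    (v : A → WithTop ℚ)
    (hv_top : ∀ a : A, v a = ⊤ ↔ a = 0)
    (hv_mul : ∀ a b : A, v (a * b) = v a + v b)
    (hv_add : ∀ a b : A, min (v a) (v b) ≤ v (a + b))
    (hv_nonneg : ∀ a : A, 0 ≤ v a)
    {d : ℕ} (x : Fin d → A)
    (hxpos : ∀ i, 0 < v (x i))
    (hreg : ∀ (σ : Equiv.Perm (Fin d)) (e : Fin d → ℕ), (∀ i, 0 < e i) →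
      AlmostRegular v (fun i => x (σ i) ^ e i))
    (t : ℕ) :
    (∏ i, x i ^ t) ∉ Ideal.span (Set.range fun i => x i ^ (t + 1)) := by
  have hv_one : v 1 = 0 := by
    refine WithTop.add_left_cancel (mt (hv_top 1).1 one_ne_zero) ?_
    rw [← hv_mul, one_mul, add_zero]
  obtain ⟨w, rfl⟩ : ∃ w : AddValuation A (WithTop ℚ), ⇑w = v :=
    ⟨.of v ((hv_top 0).2 rfl) hv_one hv_add hv_mul, rfl⟩
  intro hmem
  refine not_almostMem_one_span_range hv_nonneg hxpos ?_
  rcases Nat.eq_zero_or_pos t with rfl | ht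
  · exact .of_mem (by simpa using hmem)
  · exact almostMem_of_mul_prod_pow_mem hreg ht Finset.univ (by simpa using hmem)
end

section
/- With S = K[x,y,z,w]/(xy−zw), η² = ∏_{i=1}^4(x−α_iz), and R the normalization of S[η], let x₁ = √(x−α₁z) in a finite extension R₁ of R. Then x₁·(w/x)η ∈ (x, y)R₁; explicitly, x₁(w/x)η = x·((w/x)∏_{i=2}^4 √(x−α_iz)) − y·(α₁ ∏_{i=2}^4 √(x−α_iz)). -/
open MvPolynomial

/-- The hypersurface `S = K[x,y,z,w]/(xy - zw)`. -/
abbrev HypS (K : Type*) [Field K] : Type _ :=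
  MvPolynomial (Fin 4) K ⧸
    Ideal.span {(X 0 * X 1 - X 2 * X 3 : MvPolynomial (Fin 4) K)}

set_option synthInstance.maxHeartbeats 800000 in
/-- with `S = K[x,y,z,w]/(xy-zw)`, square roots `rᵢ = √(x - αᵢz)` in a
field extension `L ⊇ Frac S`, and `η = ∏ rᵢ`, the element `x₁ = r₁ = √(x-α₁z)`
multiplies `(w/x)η` into `(x,y)`; explicitly
`x₁·(w/x)η = x·((w/x)∏_{i≥2} rᵢ) - y·(α₁ ∏_{i≥2} rᵢ)`. -/
theorem stmt10 {K : Type*} [Field K] [CharZero K]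
    (α : Fin 4 → K) (hα : Function.Injective α)
    {L : Type*} [Field L] [Algebra (HypS K) L]
    (hinj : Function.Injective (algebraMap (HypS K) L))
    (x y z w : HypS K)
    (hx : x = Ideal.Quotient.mk _ (X 0)) (hy : y = Ideal.Quotient.mk _ (X 1))
    (hz : z = Ideal.Quotient.mk _ (X 2)) (hw : w = Ideal.Quotient.mk _ (X 3))
    (r : Fin 4 → L)
    (hr : ∀ i, (r i) ^ 2 = algebraMap (HypS K) L (x - algebraMap K (HypS K) (α i) * z))
    (η : L) (hη : η = ∏ i, r i) :
    r 0 * ((algebraMap (HypS K) L w / algebraMap (HypS K) L x) * η) =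
      algebraMap (HypS K) L x *
          ((algebraMap (HypS K) L w / algebraMap (HypS K) L x) *
            ∏ i ∈ ({1, 2, 3} : Finset (Fin 4)), r i) -
        algebraMap (HypS K) L y *
          (algebraMap (HypS K) L (algebraMap K (HypS K) (α 0)) *
            ∏ i ∈ ({1, 2, 3} : Finset (Fin 4)), r i) := by
  set A := algebraMap (HypS K) L with hA
  -- the relation x*y = z*w in HypS
  have hxy : x * y = z * w := by
    subst hx hy hz hw
    rw [← map_mul, ← map_mul, ← sub_eq_zero, ← map_sub,
      Ideal.Quotient.eq_zero_iff_mem]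
    exact Ideal.subset_span rfl
  -- x ≠ 0 in HypS
  have hxne : x ≠ 0 := by
    subst hx
    intro h
    rw [Ideal.Quotient.eq_zero_iff_mem, Ideal.mem_span_singleton] at h
    obtain ⟨c, hc⟩ := h
    have := congrArg (eval (fun i : Fin 4 => if i = 0 then (1 : K) else 0)) hc
    simp at this
  have hAx : A x ≠ 0 := fun h => hxne (hinj (h.trans (map_zero A).symm))
  have hzw : A z * A w = A x * A y := by
    rw [← map_mul, ← map_mul, ← hxy]
  have hprod : ∏ i ∈ ({1, 2, 3} : Finset (Fin 4)), r i = r 1 * r 2 * r 3 := by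
    simp [Finset.prod_insert, Finset.mem_insert]; ring
  have h0 : r 0 * r 0 = A x - A (algebraMap K (HypS K) (α 0)) * A z := by
    rw [← sq, hr 0, RingHom.map_sub, RingHom.map_mul]
  rw [hη, Fin.prod_univ_four, hprod]
  field_simp
  linear_combination (A w * (r 1 * r 2 * r 3)) * h0 -
    (A (algebraMap K (HypS K) (α 0)) * (r 1 * r 2 * r 3)) * hzw
end

section
/- Let R be an ℕ-graded domain of dimension 2, finitely generated over a field R₀ of characteristic zero, possessing a homogeneous system of parameters x, y consisting of two linear forms (degree-1 elements). Then for every integer n, [H²_m(R)]_{n+1} = [H²_m(R)]_n · R₁, where m is the homogeneous maximal ideal; in particular [H²_m(R)]_{≥0} is generated as an R-module by [H²_m(R)]₀. -/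
/-- The submodule `im(R_x) + im(R_y)` of the Čech module `R_{xy}`, so that
`H²_m(R) = R_{xy} / (im(R_x) + im(R_y))` is the top local cohomology. -/
noncomputable def cechBoundaries (R : Type*) [CommRing R] (x y : R) :
    Submodule R (Localization.Away (x * y)) :=
  Submodule.span R
      {m : Localization.Away (x * y) | ∃ (r : R) (k : ℕ),
        m = Localization.mk (r * y ^ k) (⟨(x * y) ^ k, ⟨k, rfl⟩⟩ : Submonoid.powers (x * y))} ⊔
    Submodule.span R
      {m : Localization.Away (x * y) | ∃ (r : R) (k : ℕ),
        m = Localization.mk (r * x ^ k) (⟨(x * y) ^ k, ⟨k, rfl⟩⟩ : Submonoid.powers (x * y))}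

/-- The degree-`n` component of `R_{xy}`: fractions `r/(xy)^k` with `r` homogeneous of
degree `n + 2k`. -/
def cechDegComp {K : Type*} (R : Type*) [Field K] [CommRing R] [Algebra K R]
    (𝒜 : ℕ → Submodule K R) (x y : R) (n : ℤ) : Set (Localization.Away (x * y)) :=
  {m | ∃ (k : ℕ) (r : R), 0 ≤ n + 2 * (k : ℤ) ∧ r ∈ 𝒜 (n + 2 * (k : ℤ)).toNat ∧
    m = Localization.mk r (⟨(x * y) ^ k, ⟨k, rfl⟩⟩ : Submonoid.powers (x * y))}

/-- The degree-`n` component of `H²_m(R)`, i.e. the image of the degree-`n` component of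
`R_{xy}` in the quotient `H² = R_{xy}/(im R_x + im R_y)`. -/
noncomputable def h2DegComp {K : Type*} (R : Type*) [Field K] [CommRing R] [Algebra K R]
    (𝒜 : ℕ → Submodule K R) (x y : R) (n : ℤ) :
    Set (Localization.Away (x * y) ⧸ cechBoundaries R x y) :=
  (cechBoundaries R x y).mkQ '' cechDegComp R 𝒜 x y n

/-- let `R` be an ℕ-graded domain of dimension 2, finitely generated over
a field `R₀ = K` of characteristic zero, with a homogeneous system of parameters `x, y`
consisting of linear forms.  Then for every `n`,
`[H²_m(R)]_{n+1} = [H²_m(R)]_n · R₁`; in particular `[H²_m(R)]_{≥0}` is generated as an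
`R`-module by `[H²_m(R)]₀`. -/
theorem stmt17 {K R : Type*} [Field K] [CharZero K] [CommRing R] [IsDomain R]
    [Algebra K R] [Algebra.FiniteType K R]
    (𝒜 : ℕ → Submodule K R) [GradedAlgebra 𝒜]
    (hR0 : 𝒜 0 = Subalgebra.toSubmodule (⊥ : Subalgebra K R))
    (hdim : ringKrullDim R = 2)
    (x y : R) (hx : x ∈ 𝒜 1) (hy : y ∈ 𝒜 1)
    (hsop : ∀ (n : ℕ) (r : R), 0 < n → r ∈ 𝒜 n → r ∈ (Ideal.span {x, y}).radical) :
    (∀ n : ℤ, h2DegComp R 𝒜 x y (n + 1) =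
      {h | ∃ a ∈ 𝒜 1, ∃ h₀ ∈ h2DegComp R 𝒜 x y n, h = a • h₀}) ∧
    (∀ n : ℕ, h2DegComp R 𝒜 x y (n : ℤ) ⊆
      (Submodule.span R (h2DegComp R 𝒜 x y 0) :
        Set (Localization.Away (x * y) ⧸ cechBoundaries R x y))) := by
   
  have key : ∀ n : ℤ, h2DegComp R 𝒜 x y (n + 1) =
      {h | ∃ a ∈ 𝒜 1, ∃ h₀ ∈ h2DegComp R 𝒜 x y n, h = a • h₀} := by
    intro n
    ext h
    constructor
    · rintro ⟨m, ⟨k, r, hpos, hr, rfl⟩, rfl⟩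
      refine ⟨x, hx, (cechBoundaries R x y).mkQ
        (Localization.mk (r * y)
          (⟨(x * y) ^ (k + 1), ⟨k + 1, rfl⟩⟩ : Submonoid.powers (x * y))),
        ⟨_, ⟨k + 1, r * y, by push_cast; omega, ?_, rfl⟩, rfl⟩, ?_⟩
      · have h1 : r * y ∈ 𝒜 ((n + 1 + 2 * (k : ℤ)).toNat + 1) :=
          SetLike.mul_mem_graded hr hy
        have hnat : (n + 1 + 2 * (k : ℤ)).toNat + 1 = (n + 2 * (((k : ℕ) + 1 : ℕ) : ℤ)).toNat := by
          push_cast; omega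
        rwa [hnat] at h1
      · rw [← map_smul]
        congr 1
        rw [Localization.smul_mk, smul_eq_mul]
        rw [Localization.mk_eq_mk_iff, Localization.r_iff_exists]
        exact ⟨1, by push_cast; ring⟩
    · rintro ⟨a, ha, h₀, ⟨m, ⟨k, r, hpos, hr, rfl⟩, rfl⟩, rfl⟩
      refine ⟨Localization.mk (a * r)
          (⟨(x * y) ^ k, ⟨k, rfl⟩⟩ : Submonoid.powers (x * y)),
        ⟨k, a * r, by omega, ?_, rfl⟩, ?_⟩
      · have h1 : a * r ∈ 𝒜 (1 + (n + 2 * (k : ℤ)).toNat) :=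
          SetLike.mul_mem_graded ha hr
        have hnat : 1 + (n + 2 * (k : ℤ)).toNat = (n + 1 + 2 * (k : ℤ)).toNat := by
          omega
        rwa [hnat] at h1
      · rw [← map_smul]
        congr 1
        rw [Localization.smul_mk, smul_eq_mul]
  refine ⟨key, ?_⟩
  intro n
  induction n with
  | zero => exact fun h hh => Submodule.subset_span (by simpa using hh)
  | succ n ih =>
    intro h hh
    have hmem : h ∈ h2DegComp R 𝒜 x y ((n : ℤ) + 1) := by
      have hc : ((n + 1 : ℕ) : ℤ) = (n : ℤ) + 1 := by push_cast; ring
      rwa [hc] at hh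
    rw [key n] at hmem
    obtain ⟨a, _, h₀, hh₀, rfl⟩ := hmem
    exact Submodule.smul_mem _ a (ih hh₀)
end

section
/- Let K = ℚ(θ) with θ a primitive cube root of unity, and A = K[x,y,z]/(θx³ + θ²y³ + z³), a graded ring with deg x = deg y = deg z = 1 and homogeneous maximal ideal m = (x,y,z). Then x, y form a homogeneous system of parameters for A (i.e., A/(x,y) is zero-dimensional), and z² ∉ (x,y)A, so the Čech cohomology class [z²/(xy)] ∈ H²_m(A) is nonzero. -/
open MvPolynomial

/-- The cubic cone `A = K[x,y,z]/(θx³ + θ²y³ + z³)` over `K = ℚ(θ)`. -/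
abbrev CubicCone (θ : CyclotomicField 3 ℚ) : Type _ :=
  MvPolynomial (Fin 3) (CyclotomicField 3 ℚ) ⧸
    Ideal.span
      {(C θ * X 0 ^ 3 + C (θ ^ 2) * X 1 ^ 3 + X 2 ^ 3 :
        MvPolynomial (Fin 3) (CyclotomicField 3 ℚ))}

/-!
The cubic `f = a x³ + b y³ + z³` is monic of degree 3 in `z` over `S = R[x,y]`. If
`m z² ∈ (xⁿ, yⁿ) + (f)` with `m ∈ S`, then in `(S/(xⁿ, yⁿ))[z]` the polynomial `m z²` of
degree `< 3` is a multiple of the monic cubic `f`, hence zero: `m ∈ (xⁿ, yⁿ)`. For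
`m = (xy)ⁿ⁻¹` this is false, `(xⁿ, yⁿ)` being a monomial ideal.
Modulo `(x, y)` the equation `f = 0` becomes `z³ = 0`, so `(x, y, z)` is the only prime
of `A/(x, y)`.
-/

theorem Polynomial.mem_of_C_mul_X_pow_mem_map_C_sup_span {R : Type*} [CommRing R]
    {I : Ideal R} {p : Polynomial R} (hp : p.Monic) {r : R} {k : ℕ} (hk : k < p.natDegree)
    (h : C r * X ^ k ∈ I.map C ⊔ Ideal.span {p}) : r ∈ I := by
  by_contra hr
  have : Nontrivial (R ⧸ I) :=
    Ideal.Quotient.nontrivial_iff.mpr (by rintro rfl; exact hr trivial)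
  obtain ⟨q, hq, s, hs, hqs⟩ := Submodule.mem_sup.mp h
  obtain ⟨c, rfl⟩ := Ideal.mem_span_singleton'.mp hs
  let φ := mapRingHom (Ideal.Quotient.mk I)
  have hφq : φ q = 0 := by
    rwa [← RingHom.mem_ker, ker_mapRingHom, Ideal.mk_ker]
  have hdvd : p.map (Ideal.Quotient.mk I) ∣ C (Ideal.Quotient.mk I r) * X ^ k := by
    refine ⟨φ c, ?_⟩
    have := congrArg φ hqs
    rw [map_add, hφq, zero_add] at this
    simp only [φ, map_mul, map_pow, coe_mapRingHom, map_C, map_X] at this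
    rw [← this, mul_comm]
    rfl
  refine (hp.map _).not_dvd_of_natDegree_lt ?_ ?_ hdvd
  · simpa [C_mul_X_pow_eq_monomial, Ideal.Quotient.eq_zero_iff_mem] using hr
  · rw [hp.natDegree_map]
    exact (natDegree_C_mul_X_pow_le _ _).trans_lt hk

theorem ringKrullDim_quotient_eq_zero_of_le_radical {R : Type*} [CommRing R] {J m : Ideal R}
    [hm : m.IsMaximal] (hJm : J ≤ m) (hmJ : m ≤ J.radical) : ringKrullDim (R ⧸ J) = 0 := by
  have : Nontrivial (R ⧸ J) :=
    Ideal.Quotient.nontrivial_iff.mpr (ne_top_of_le_ne_top hm.ne_top hJm)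
  rw [← ringKrullDimZero_iff_ringKrullDim_eq_zero,
    Ideal.krullDimLE_zero_quotient_iff_forall_minimalPrimes_isMaximal]
  rintro P ⟨⟨hP, hJP⟩, -⟩
  rwa [← hm.eq_of_le hP.ne_top (hmJ.trans (hP.radical_le_iff.mpr hJP))]

namespace MvPolynomial

theorem X_mul_X_pow_pred_notMem_span_X_pow {σ R : Type*} [CommSemiring R] [Nontrivial R]
    {i j : σ} (hij : i ≠ j) {n : ℕ} (hn : 1 ≤ n) :
    (X i * X j : MvPolynomial σ R) ^ (n - 1) ∉ Ideal.span {X i ^ n, X j ^ n} := by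
  classical
  have hspan : ({X i ^ n, X j ^ n} : Set (MvPolynomial σ R)) =
      (fun s => monomial s (1 : R)) '' {Finsupp.single i n, Finsupp.single j n} := by
    simp [Set.image_pair, X_pow_eq_monomial]
  rw [hspan, mem_ideal_span_monomial_image, mul_pow, X_pow_eq_monomial, X_pow_eq_monomial,
    monomial_mul, one_mul, support_monomial, if_neg one_ne_zero]
  simp only [Finset.mem_singleton, forall_eq, Set.mem_insert_iff, Set.mem_singleton_iff,
    exists_eq_or_imp, exists_eq_left]
  rintro (h | h)
  · have := h i
    simp [hij] at this
    omega
  · have := h j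
    simp [hij.symm] at this
    omega

theorem ker_constantCoeff_le_idealOfVars {σ R : Type*} [CommSemiring R] :
    RingHom.ker (constantCoeff : MvPolynomial σ R →+* R) ≤ idealOfVars σ R := by
  intro p hp
  rw [← pow_one (idealOfVars σ R), mem_pow_idealOfVars_iff']
  intro x hx
  rw [Nat.lt_one_iff, Finsupp.degree_eq_zero_iff] at hx
  rwa [hx, ← constantCoeff_eq]

variable (R : Type*) [CommRing R]

noncomputable def finThreeEquivPolynomial :
    MvPolynomial (Fin 3) R ≃ₐ[R] Polynomial (MvPolynomial (Fin 2) R) :=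
  (renameEquiv R (finRotate 3)).trans (finSuccEquiv R 2)

theorem finThreeEquivPolynomial_X_zero :
    finThreeEquivPolynomial R (X 0) = Polynomial.C (X 0) := by
  rw [finThreeEquivPolynomial, AlgEquiv.trans_apply, renameEquiv_apply, rename_X]
  exact finSuccEquiv_X_succ (j := 0)

theorem finThreeEquivPolynomial_X_one :
    finThreeEquivPolynomial R (X 1) = Polynomial.C (X 1) := by
  rw [finThreeEquivPolynomial, AlgEquiv.trans_apply, renameEquiv_apply, rename_X]
  exact finSuccEquiv_X_succ (j := 1)

theorem finThreeEquivPolynomial_X_two : finThreeEquivPolynomial R (X 2) = Polynomial.X := by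
  rw [finThreeEquivPolynomial, AlgEquiv.trans_apply, renameEquiv_apply, rename_X]
  exact finSuccEquiv_X_zero

theorem finThreeEquivPolynomial_C (a : R) :
    finThreeEquivPolynomial R (C a) = Polynomial.C (C a) :=
  (finThreeEquivPolynomial R).commutes a

end MvPolynomial

section DiagonalCubic

variable {R : Type*} [CommRing R]

noncomputable def diagonalCubic (a b : R) : MvPolynomial (Fin 3) R :=
  C a * X 0 ^ 3 + C b * X 1 ^ 3 + X 2 ^ 3

abbrev DiagonalCubicCone (a b : R) : Type _ :=
  MvPolynomial (Fin 3) R ⧸ Ideal.span {diagonalCubic a b}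

theorem finThreeEquivPolynomial_diagonalCubic (a b : R) :
    finThreeEquivPolynomial R (diagonalCubic a b) =
      Polynomial.X ^ 3 + Polynomial.C (C a * X 0 ^ 3 + C b * X 1 ^ 3) := by
  simp only [diagonalCubic, map_add, map_mul, map_pow, finThreeEquivPolynomial_X_zero,
    finThreeEquivPolynomial_X_one, finThreeEquivPolynomial_X_two, finThreeEquivPolynomial_C]
  ring

theorem DiagonalCubicCone.X_two_sq_mul_pow_notMem_span_pow [Nontrivial R] (a b : R) {n : ℕ}
    (hn : 1 ≤ n) :
    (Ideal.Quotient.mk _ (X 2) : DiagonalCubicCone a b) ^ 2 *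
        (Ideal.Quotient.mk _ (X 0) * Ideal.Quotient.mk _ (X 1)) ^ (n - 1) ∉
      Ideal.span {(Ideal.Quotient.mk _ (X 0) : DiagonalCubicCone a b) ^ n,
        Ideal.Quotient.mk _ (X 1) ^ n} := by
  intro h
  have hlift : (X 2 ^ 2 * (X 0 * X 1) ^ (n - 1) : MvPolynomial (Fin 3) R) ∈
      Ideal.span {X 0 ^ n, X 1 ^ n} ⊔ Ideal.span {diagonalCubic a b} := by
    rw [← Ideal.mem_quotient_iff_mem_sup, Ideal.map_span, Set.image_pair]
    simpa only [map_mul, map_pow] using h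
  have hpoly : Polynomial.C ((X 0 * X 1) ^ (n - 1)) * Polynomial.X ^ 2 ∈
      (Ideal.span {X 0 ^ n, X 1 ^ n} : Ideal (MvPolynomial (Fin 2) R)).map Polynomial.C ⊔
        Ideal.span {Polynomial.X ^ 3 + Polynomial.C (C a * X 0 ^ 3 + C b * X 1 ^ 3)} := by
    have := Ideal.mem_map_of_mem (finThreeEquivPolynomial R) hlift
    rw [Ideal.map_sup, Ideal.map_span, Ideal.map_span, Set.image_pair, Set.image_singleton,
      finThreeEquivPolynomial_diagonalCubic] at this
    simpa only [Ideal.map_span, Set.image_pair, map_mul, map_pow, finThreeEquivPolynomial_X_zero,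
      finThreeEquivPolynomial_X_one, finThreeEquivPolynomial_X_two, mul_comm] using this
  have hmonic := Polynomial.monic_X_pow_add_C
    (C a * X 0 ^ 3 + C b * X 1 ^ 3 : MvPolynomial (Fin 2) R) three_ne_zero
  refine X_mul_X_pow_pred_notMem_span_X_pow (by decide : (0 : Fin 2) ≠ 1) hn
    (Polynomial.mem_of_C_mul_X_pow_mem_map_C_sup_span hmonic ?_ hpoly)
  rw [Polynomial.natDegree_X_pow_add_C]
  norm_num

theorem DiagonalCubicCone.ringKrullDim_quotient_span_X_zero_X_one {K : Type*} [Field K]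
    (a b : K) :
    ringKrullDim (DiagonalCubicCone a b ⧸
      Ideal.span ({Ideal.Quotient.mk _ (X 0), Ideal.Quotient.mk _ (X 1)} :
        Set (DiagonalCubicCone a b))) = 0 := by
  set J : Ideal (MvPolynomial (Fin 3) K) := Ideal.span {diagonalCubic a b} ⊔ Ideal.span {X 0, X 1}
  have hX : X 0 ∈ J ∧ X 1 ∈ J :=
    ⟨Ideal.mem_sup_right (Ideal.subset_span (by simp)),
      Ideal.mem_sup_right (Ideal.subset_span (by simp))⟩
  have hZ : X 2 ^ 3 ∈ J := by
    have : (X 2 ^ 3 : MvPolynomial (Fin 3) K) =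
        diagonalCubic a b - (C a * X 0 ^ 2) * X 0 - (C b * X 1 ^ 2) * X 1 := by
      rw [diagonalCubic]; ring
    rw [this]
    exact sub_mem (sub_mem (Ideal.mem_sup_left (Ideal.mem_span_singleton_self _))
      (Ideal.mul_mem_left _ _ hX.1)) (Ideal.mul_mem_left _ _ hX.2)
  have : (RingHom.ker (constantCoeff : MvPolynomial (Fin 3) K →+* K)).IsMaximal :=
    RingHom.ker_isMaximal_of_surjective _ fun k => ⟨C k, constantCoeff_C _ k⟩
  rw [ringKrullDim_eq_of_ringEquiv ((Ideal.quotEquivOfEq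
    (by rw [Ideal.map_span, Set.image_pair])).trans (DoubleQuot.quotQuotEquivQuotSup _ _))]
  refine ringKrullDim_quotient_eq_zero_of_le_radical (m := RingHom.ker constantCoeff) ?_ ?_
  · rw [sup_le_iff, Ideal.span_le, Ideal.span_le]
    exact ⟨by simp [diagonalCubic], by simp [Set.insert_subset_iff]⟩
  · refine ker_constantCoeff_le_idealOfVars.trans
      (Ideal.span_le.2 (Set.range_subset_iff.2 fun i => ?_))
    fin_cases i
    · exact Ideal.le_radical hX.1
    · exact Ideal.le_radical hX.2
    · exact ⟨3, hZ⟩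

end DiagonalCubic

theorem stmt19_general (θ : CyclotomicField 3 ℚ) :
    ringKrullDim
        (CubicCone θ ⧸
          Ideal.span ({Ideal.Quotient.mk _ (X 0), Ideal.Quotient.mk _ (X 1)} :
            Set (CubicCone θ))) = 0 ∧
    ((Ideal.Quotient.mk _ (X 2) : CubicCone θ) ^ 2 ∉
      Ideal.span ({Ideal.Quotient.mk _ (X 0), Ideal.Quotient.mk _ (X 1)} :
        Set (CubicCone θ))) ∧
    (∀ n : ℕ, 1 ≤ n →
      (Ideal.Quotient.mk _ (X 2) : CubicCone θ) ^ 2 *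
          (Ideal.Quotient.mk _ (X 0) * Ideal.Quotient.mk _ (X 1)) ^ (n - 1) ∉
        Ideal.span ({(Ideal.Quotient.mk _ (X 0) : CubicCone θ) ^ n,
          (Ideal.Quotient.mk _ (X 1) : CubicCone θ) ^ n} : Set (CubicCone θ))) := by
  have hcech (n : ℕ) (hn : 1 ≤ n) :=
    DiagonalCubicCone.X_two_sq_mul_pow_notMem_span_pow θ (θ ^ 2) hn
  have hz := hcech 1 le_rfl
  rw [Nat.sub_self, pow_zero, mul_one, pow_one, pow_one] at hz
  exact ⟨DiagonalCubicCone.ringKrullDim_quotient_span_X_zero_X_one θ (θ ^ 2), hz, hcech⟩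

/-- let `K = ℚ(θ)` with `θ` a primitive cube root of unity and
`A = K[x,y,z]/(θx³ + θ²y³ + z³)`.  Then `x, y` form a homogeneous system of parameters
(`A/(x,y)` is zero-dimensional), `z² ∉ (x,y)A`, and the Čech class `[z²/(xy)] ∈ H²_m(A)`
is nonzero, i.e. `z²(xy)^{n-1} ∉ (xⁿ, yⁿ)A` for all `n ≥ 1`. -/
theorem stmt19 (θ : CyclotomicField 3 ℚ) (hθ : IsPrimitiveRoot θ 3) :
    ringKrullDim
        (CubicCone θ ⧸
          Ideal.span ({Ideal.Quotient.mk _ (X 0), Ideal.Quotient.mk _ (X 1)} :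
            Set (CubicCone θ))) = 0 ∧
    ((Ideal.Quotient.mk _ (X 2) : CubicCone θ) ^ 2 ∉
      Ideal.span ({Ideal.Quotient.mk _ (X 0), Ideal.Quotient.mk _ (X 1)} :
        Set (CubicCone θ))) ∧
    (∀ n : ℕ, 1 ≤ n →
      (Ideal.Quotient.mk _ (X 2) : CubicCone θ) ^ 2 *
          (Ideal.Quotient.mk _ (X 0) * Ideal.Quotient.mk _ (X 1)) ^ (n - 1) ∉
        Ideal.span ({(Ideal.Quotient.mk _ (X 0) : CubicCone θ) ^ n,
          (Ideal.Quotient.mk _ (X 1) : CubicCone θ) ^ n} : Set (CubicCone θ))) :=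
  stmt19_general θ
end
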